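/- arXiv:1412.8045 — 7 statements merged into one kernel-verified Lean document; each statement's English description precedes it below -/
import Mathlib

section
/- (Positive Definite quNac.) Let ρ ∈ ℕ, let G₀ ∈ ℝ^{n×n} be symmetric positive definite, and for k = 0,…,ρ let Q_{k+1} ∈ ℝ^{n×n} be symmetric and Sₖ ∈ ℝ^{n×q_k} be such that Sₖᵀ·Q_{k+1}·Sₖ is positive definite. Define iteratively G_{k+1} := Q_{k+1}·P(Sₖ,Q_{k+1})·Q_{k+1} + (I − Q_{k+1}·P(Sₖ,Q_{k+1}))·Gₖ·(I − P(Sₖ,Q_{k+1})·Q_{k+1}), where P(Sₖ,Q_{k+1}) := Sₖ(SₖᵀQ_{k+1}Sₖ)⁻¹Sₖᵀ. Then Gₖ is symmetric positive definite for every k = 0,…,ρ+1. -/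
/-! With `M := Sᵀ Q S` and `A := I - P Q`, symmetry of `Q` and `P` rewrites the update as
`(Sᵀ Q)ᵀ M⁻¹ (Sᵀ Q) + Aᵀ G A`, a sum of two positive semidefinite matrices. A vector on which
both quadratic forms vanish satisfies `Sᵀ Q x = 0` and `A x = 0`, since `M⁻¹` and `G` are positive
definite; then `x = A x + S M⁻¹ Sᵀ Q x = 0`. -/

open Matrix

/-- The projection-type matrix `P(S,Q) := S (Sᵀ Q S)⁻¹ Sᵀ`. -/
noncomputable def projMat {n q : ℕ} (S : Matrix (Fin n) (Fin q) ℝ)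
    (Q : Matrix (Fin n) (Fin n) ℝ) : Matrix (Fin n) (Fin n) ℝ :=
  S * (Sᵀ * Q * S)⁻¹ * Sᵀ

namespace Matrix

variable {m k : Type*} [Fintype m] [Fintype k]

lemma dotProduct_transpose_mul_mul_mulVec (B : Matrix m k ℝ) (C : Matrix m m ℝ) (x : k → ℝ) :
    x ⬝ᵥ (Bᵀ * C * B) *ᵥ x = (B *ᵥ x) ⬝ᵥ C *ᵥ (B *ᵥ x) := by
  rw [Matrix.mul_assoc, ← mulVec_mulVec, dotProduct_mulVec, vecMul_transpose, ← mulVec_mulVec]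

lemma PosDef.mulVec_eq_zero_of_dotProduct_transpose_mul_mul_mulVec_eq_zero {C : Matrix m m ℝ}
    (hC : C.PosDef) {B : Matrix m k ℝ} {x : k → ℝ} (h : x ⬝ᵥ (Bᵀ * C * B) *ᵥ x = 0) :
    B *ᵥ x = 0 := by
  by_contra hBx
  have := hC.dotProduct_mulVec_pos hBx
  rw [star_trivial, ← dotProduct_transpose_mul_mul_mulVec, h] at this
  exact this.false

lemma PosSemidef.transpose_mul_mul_same {C : Matrix m m ℝ} (hC : C.PosSemidef)
    (B : Matrix m k ℝ) : (Bᵀ * C * B).PosSemidef := by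
  simpa only [conjTranspose_eq_transpose_of_trivial] using hC.conjTranspose_mul_mul_same B

lemma posDef_add_of_dotProduct_mulVec_eq_zero {A B : Matrix m m ℝ} (hA : A.PosSemidef)
    (hB : B.PosSemidef) (h : ∀ x, x ⬝ᵥ A *ᵥ x = 0 → x ⬝ᵥ B *ᵥ x = 0 → x = 0) :
    (A + B).PosDef := by
  refine posDef_iff_dotProduct_mulVec.mpr ⟨hA.1.add hB.1, fun x hx => ?_⟩
  have hAx := hA.dotProduct_mulVec_nonneg x
  have hBx := hB.dotProduct_mulVec_nonneg x
  rw [star_trivial] at hAx hBx ⊢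
  rw [add_mulVec, dotProduct_add]
  by_contra! hle
  exact hx (h x (by linarith) (by linarith))

end Matrix

section quNac

variable {n q : ℕ} {S : Matrix (Fin n) (Fin q) ℝ} {Q : Matrix (Fin n) (Fin n) ℝ}

lemma projMat_transpose (hQ : Q.IsSymm) : (projMat S Q)ᵀ = projMat S Q := by
  have hM : (Sᵀ * Q * S)ᵀ = Sᵀ * Q * S := by
    rw [transpose_mul, transpose_mul, transpose_transpose, hQ.eq, Matrix.mul_assoc]
  rw [projMat, transpose_mul, transpose_mul, transpose_transpose, transpose_nonsing_inv, hM,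
    ← Matrix.mul_assoc]

lemma quNac_eq_add_transpose_mul_mul (hQ : Q.IsSymm) (G : Matrix (Fin n) (Fin n) ℝ) :
    Q * projMat S Q * Q + (1 - Q * projMat S Q) * G * (1 - projMat S Q * Q) =
      (Sᵀ * Q)ᵀ * (Sᵀ * Q * S)⁻¹ * (Sᵀ * Q) +
        (1 - projMat S Q * Q)ᵀ * G * (1 - projMat S Q * Q) := by
  rw [transpose_sub, transpose_one, transpose_mul, transpose_mul (projMat S Q),
    projMat_transpose hQ, transpose_transpose, hQ.eq, projMat]
  simp only [Matrix.mul_assoc]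

lemma eq_sub_projMat_mul_mulVec_add (x : Fin n → ℝ) :
    x = (1 - projMat S Q * Q) *ᵥ x + S *ᵥ ((Sᵀ * Q * S)⁻¹ *ᵥ ((Sᵀ * Q) *ᵥ x)) := by
  rw [mulVec_mulVec, mulVec_mulVec, sub_mulVec, one_mulVec, projMat]
  simp only [Matrix.mul_assoc, sub_add_cancel]

lemma quNac_posDef (hQ : Q.IsSymm) (hM : (Sᵀ * Q * S).PosDef) {G : Matrix (Fin n) (Fin n) ℝ}
    (hG : G.PosDef) :
    (Q * projMat S Q * Q + (1 - Q * projMat S Q) * G * (1 - projMat S Q * Q)).PosDef := by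
  rw [quNac_eq_add_transpose_mul_mul hQ]
  refine posDef_add_of_dotProduct_mulVec_eq_zero (hM.inv.posSemidef.transpose_mul_mul_same _)
    (hG.posSemidef.transpose_mul_mul_same _) fun x hx₁ hx₂ => ?_
  rw [eq_sub_projMat_mul_mulVec_add (S := S) (Q := Q) x,
    hM.inv.mulVec_eq_zero_of_dotProduct_transpose_mul_mul_mulVec_eq_zero hx₁,
    hG.mulVec_eq_zero_of_dotProduct_transpose_mul_mul_mulVec_eq_zero hx₂]
  simp

end quNac

/-- Positive Definite quNac: the quNac updates preserve symmetric positive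
definiteness of the estimate matrices. -/
theorem stmt8 {n : ℕ} (ρ : ℕ)
    (q : ℕ → ℕ)
    (Q : ℕ → Matrix (Fin n) (Fin n) ℝ)
    (S : (k : ℕ) → Matrix (Fin n) (Fin (q k)) ℝ)
    (hQ : ∀ k ≤ ρ, (Q (k + 1)).IsSymm)
    (hSQS : ∀ k ≤ ρ, ((S k)ᵀ * Q (k + 1) * S k).PosDef)
    (G : ℕ → Matrix (Fin n) (Fin n) ℝ)
    (hG₀ : (G 0).PosDef)
    (hrec : ∀ k ≤ ρ, G (k + 1) =
      Q (k + 1) * projMat (S k) (Q (k + 1)) * Q (k + 1) +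
        (1 - Q (k + 1) * projMat (S k) (Q (k + 1))) * G k *
          (1 - projMat (S k) (Q (k + 1)) * Q (k + 1))) :
    ∀ k ≤ ρ + 1, (G k).PosDef := by
  intro k
  induction k with
  | zero => exact fun _ => hG₀
  | succ k ih =>
    intro hk
    have hkρ : k ≤ ρ := Nat.succ_le_succ_iff.mp hk
    rw [hrec k hkρ]
    exact quNac_posDef (hQ k hkρ) (hSQS k hkρ) (ih (hkρ.trans ρ.le_succ))
end

section
/- Let G, Q ∈ ℝ^{n×n} be symmetric and S ∈ ℝ^{n×q} be such that SᵀQS is invertible, and let G⁺ := Q·P(S,Q)·Q + (I − Q·P(S,Q))·G·(I − P(S,Q)·Q) with P(S,Q) := S(SᵀQS)⁻¹Sᵀ. Then G⁺ is symmetric, satisfies the action constraint G⁺·S = Q·S, and the update G⁺ − G has rank at most 2q. -/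
open Matrix

lemma matrix_rank_add_le {n : ℕ} (A B : Matrix (Fin n) (Fin n) ℝ) :
    (A + B).rank ≤ A.rank + B.rank := by
  have hrange : LinearMap.range (A + B).mulVecLin ≤
      LinearMap.range A.mulVecLin ⊔ LinearMap.range B.mulVecLin := by
    rintro x ⟨y, rfl⟩
    exact Submodule.mem_sup.mpr ⟨A.mulVecLin y, ⟨y, rfl⟩, B.mulVecLin y, ⟨y, rfl⟩,
      by simp [Matrix.mulVecLin_add]⟩
  exact (Submodule.finrank_mono hrange).trans
    (Submodule.finrank_add_le_finrank_add_finrank _ _)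

/-- The quNac update `G⁺` is symmetric, satisfies the action constraint
`G⁺·S = Q·S`, and `G⁺ − G` has rank at most `2q`. -/
theorem stmt9 {n q : ℕ} (G Q : Matrix (Fin n) (Fin n) ℝ)
    (hG : G.IsSymm) (hQ : Q.IsSymm)
    (S : Matrix (Fin n) (Fin q) ℝ) (hSQS : IsUnit (Sᵀ * Q * S)) :
    ((Q * projMat S Q * Q + (1 - Q * projMat S Q) * G * (1 - projMat S Q * Q)).IsSymm) ∧
    ((Q * projMat S Q * Q + (1 - Q * projMat S Q) * G * (1 - projMat S Q * Q)) * S = Q * S) ∧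
    ((Q * projMat S Q * Q + (1 - Q * projMat S Q) * G * (1 - projMat S Q * Q)) - G).rank
      ≤ 2 * q := by
  set B := (Sᵀ * Q * S)⁻¹ with hB
  set P := projMat S Q with hP
  have hPdef : P = S * B * Sᵀ := rfl
  have hSQSymm : (Sᵀ * Q * S)ᵀ = Sᵀ * Q * S := by
    simp [Matrix.transpose_mul, Matrix.mul_assoc, hQ.eq]
  have hBsymm : Bᵀ = B := by
    rw [hB, Matrix.transpose_nonsing_inv, hSQSymm]
  have hPsymm : Pᵀ = P := by
    rw [hPdef]
    simp only [Matrix.transpose_mul, Matrix.transpose_transpose, hBsymm, Matrix.mul_assoc]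
  have hinv : B * (Sᵀ * Q * S) = 1 :=
    Matrix.nonsing_inv_mul _ ((Matrix.isUnit_iff_isUnit_det _).mp hSQS)
  have hinv' : B * (Sᵀ * (Q * S)) = 1 := by rw [← Matrix.mul_assoc Sᵀ Q S]; exact hinv
  have hPQS : P * (Q * S) = S := by
    rw [hPdef]
    calc S * B * Sᵀ * (Q * S) = S * (B * (Sᵀ * (Q * S))) := by
          simp only [Matrix.mul_assoc]
      _ = S := by rw [hinv', Matrix.mul_one]
  refine ⟨?_, ?_, ?_⟩
  · -- symmetry
    unfold Matrix.IsSymm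
    simp only [Matrix.transpose_add, Matrix.transpose_mul, Matrix.transpose_sub,
      Matrix.transpose_one, hPsymm, hQ.eq, hG.eq]
    noncomm_ring
  · -- action constraint
    have h1 : (1 - P * Q) * S = 0 := by
      rw [Matrix.sub_mul, Matrix.one_mul, Matrix.mul_assoc, hPQS, sub_self]
    have h2 : Q * P * Q * S = Q * S := by
      rw [Matrix.mul_assoc, Matrix.mul_assoc, hPQS]
    rw [Matrix.add_mul, Matrix.mul_assoc ((1 - Q * P) * G) (1 - P * Q) S, h1,
      Matrix.mul_zero, add_zero, h2]
  · -- rank bound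
    have hdiff : (Q * P * Q + (1 - Q * P) * G * (1 - P * Q)) - G =
        Q * P * (Q - G) + (Q * P - 1) * G * (P * Q) := by
      noncomm_ring
    rw [hdiff]
    have hr1 : (Q * P * (Q - G)).rank ≤ q := by
      have h : Q * P * (Q - G) = (Q * S) * (B * (Sᵀ * (Q - G))) := by
        rw [hPdef]; simp only [Matrix.mul_assoc]
      rw [h]
      exact (Matrix.rank_mul_le_left _ _).trans (Matrix.rank_le_width _)
    have hr2 : ((Q * P - 1) * G * (P * Q)).rank ≤ q := by
      have h : (Q * P - 1) * G * (P * Q) = ((Q * P - 1) * G * S) * (B * (Sᵀ * Q)) := by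
        rw [hPdef]; simp only [Matrix.mul_assoc]
      rw [h]
      exact (Matrix.rank_mul_le_left _ _).trans (Matrix.rank_le_width _)
    calc (Q * P * (Q - G) + (Q * P - 1) * G * (P * Q)).rank
        ≤ (Q * P * (Q - G)).rank + ((Q * P - 1) * G * (P * Q)).rank :=
          matrix_rank_add_le _ _
      _ ≤ q + q := add_le_add hr1 hr2
      _ = 2 * q := by ring
end

section
/- (Unravelling.) Let Q ∈ ℝ^{n×n} be symmetric, let s₁,…,s_q ∈ ℝⁿ satisfy sᵢᵀQsⱼ = 0 for i ≠ j and sᵢᵀQsᵢ ≠ 0 for each i, and let S := [s₁,…,s_q] ∈ ℝ^{n×q} be their horizontal concatenation (so SᵀQS is an invertible diagonal matrix). Let G ∈ ℝ^{n×n} be symmetric. Define G¹ := G and, for i = 1,…,q, G^{i+1} := quNac(Gⁱ, sᵢ, Q) where quNac with a single column sᵢ is Q·(sᵢsᵢᵀ/(sᵢᵀQsᵢ))·Q + (I − Q·sᵢsᵢᵀ/(sᵢᵀQsᵢ))·Gⁱ·(I − (sᵢsᵢᵀ/(sᵢᵀQsᵢ))·Q). Then the result of these q sequential rank-2 updates equals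 the single block update: G^{q+1} = quNac(G, S, Q) = Q·P(S,Q)·Q + (I − Q·P(S,Q))·G·(I − P(S,Q)·Q). -/
/-!
In any ring, two updates `G ↦ Q P Q + (1 - Q P) G (1 - P Q)`, first with `P = A` and then with
`P = B`, compose to the update with `P = A + B` as soon as `A Q B = 0 = B Q A`. The single-column
update is this update with `P_i = sᵢ sᵢᵀ / (sᵢᵀ Q sᵢ)`, and `Q`-orthogonality gives
`P_i Q P_j = 0` for `i ≠ j`, so the `q` sequential updates give the update with `∑ P_i`.
Finally `Sᵀ Q S` is diagonal, hence `P(S,Q) = ∑ P_i`.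
-/

open Matrix

/-- The rank-2 quNac update built from a single column `s`. -/
noncomputable def quNac1 {n : ℕ} (G : Matrix (Fin n) (Fin n) ℝ) (s : Fin n → ℝ)
    (Q : Matrix (Fin n) (Fin n) ℝ) : Matrix (Fin n) (Fin n) ℝ :=
  Q * ((s ⬝ᵥ (Q *ᵥ s))⁻¹ • vecMulVec s s) * Q +
    (1 - Q * ((s ⬝ᵥ (Q *ᵥ s))⁻¹ • vecMulVec s s)) * G *
      (1 - ((s ⬝ᵥ (Q *ᵥ s))⁻¹ • vecMulVec s s) * Q)

section Ring

variable {R : Type*} [Ring R]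

def quNacProj (G P Q : R) : R :=
  Q * P * Q + (1 - Q * P) * G * (1 - P * Q)

theorem quNacProj_quNacProj {G A B Q : R} (hAB : A * Q * B = 0) (hBA : B * Q * A = 0) :
    quNacProj (quNacProj G A Q) B Q = quNacProj G (A + B) Q := by
  have hmid : (1 - Q * B) * (Q * A * Q) * (1 - B * Q) = Q * A * Q := by
    calc (1 - Q * B) * (Q * A * Q) * (1 - B * Q)
        = Q * A * Q - Q * (B * Q * A) * Q - Q * (A * Q * B) * Q
            + Q * (B * Q * A) * Q * (B * Q) := by noncomm_ring
      _ = Q * A * Q := by rw [hAB, hBA]; noncomm_ring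
  have hleft : (1 - Q * B) * (1 - Q * A) = 1 - Q * (A + B) := by
    calc (1 - Q * B) * (1 - Q * A)
        = 1 - Q * (A + B) + Q * (B * Q * A) := by noncomm_ring
      _ = 1 - Q * (A + B) := by rw [hBA]; noncomm_ring
  have hright : (1 - A * Q) * (1 - B * Q) = 1 - (A + B) * Q := by
    calc (1 - A * Q) * (1 - B * Q)
        = 1 - (A + B) * Q + A * Q * B * Q := by noncomm_ring
      _ = 1 - (A + B) * Q := by rw [hAB]; noncomm_ring
  calc quNacProj (quNacProj G A Q) B Q
      = Q * B * Q + (1 - Q * B) * (Q * A * Q) * (1 - B * Q)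
          + ((1 - Q * B) * (1 - Q * A)) * G * ((1 - A * Q) * (1 - B * Q)) := by
        unfold quNacProj; noncomm_ring
    _ = quNacProj G (A + B) Q := by
        rw [hmid, hleft, hright]; unfold quNacProj; noncomm_ring

theorem quNacProj_sequential {Q : R} {P G : ℕ → R} {k : ℕ}
    (horth : ∀ i < k, ∀ j < k, i ≠ j → P i * Q * P j = 0)
    (hrec : ∀ i < k, G (i + 1) = quNacProj (G i) (P i) Q) :
    G k = quNacProj (G 0) (∑ i ∈ Finset.range k, P i) Q := by
  induction k with
  | zero => simp [quNacProj]
  | succ k ih =>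
    have hsumP : (∑ i ∈ Finset.range k, P i) * Q * P k = 0 := by
      rw [Finset.sum_mul, Finset.sum_mul]
      refine Finset.sum_eq_zero fun i hi => horth i ?_ k ?_ ?_ <;> grind
    have hPsum : P k * Q * (∑ i ∈ Finset.range k, P i) = 0 := by
      rw [Finset.mul_sum]
      refine Finset.sum_eq_zero fun i hi => horth k ?_ i ?_ ?_ <;> grind
    rw [hrec k k.lt_succ_self, ih (fun i hi j hj => horth i (by omega) j (by omega))
      (fun i hi => hrec i (by omega)), quNacProj_quNacProj hsumP hPsum, Finset.sum_range_succ]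

end Ring

section RankOne

variable {n : Type*} [Fintype n]

noncomputable def rankOneProj (s : n → ℝ) (Q : Matrix n n ℝ) : Matrix n n ℝ :=
  (s ⬝ᵥ (Q *ᵥ s))⁻¹ • vecMulVec s s

theorem vecMulVec_mul_mul_vecMulVec (a b c e : n → ℝ) (Q : Matrix n n ℝ) :
    vecMulVec a b * Q * vecMulVec c e = (b ⬝ᵥ (Q *ᵥ c)) • vecMulVec a e := by
  rw [Matrix.mul_assoc, mul_vecMulVec, vecMulVec_mul_vecMulVec, vecMulVec_smul]

theorem rankOneProj_mul_mul_rankOneProj {s t : n → ℝ} {Q : Matrix n n ℝ}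
    (h : s ⬝ᵥ (Q *ᵥ t) = 0) : rankOneProj s Q * Q * rankOneProj t Q = 0 := by
  simp only [rankOneProj, Matrix.smul_mul, Matrix.mul_smul, vecMulVec_mul_mul_vecMulVec, h,
    zero_smul, smul_zero]

theorem quNac1_eq_quNacProj {m : ℕ} (G Q : Matrix (Fin m) (Fin m) ℝ) (s : Fin m → ℝ) :
    quNac1 G s Q = quNacProj G (rankOneProj s Q) Q := rfl

end RankOne

section Columns

variable {n ι : Type*}

theorem transpose_mul_mul_of_columns [Fintype n] (s : ι → n → ℝ) (Q : Matrix n n ℝ) :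
    (of fun r j => s j r)ᵀ * Q * (of fun r j => s j r) = of fun i j => s i ⬝ᵥ (Q *ᵥ s j) := by
  ext i j
  simp only [mul_apply, transpose_apply, of_apply, dotProduct, mulVec, Finset.sum_mul,
    Finset.mul_sum]
  rw [Finset.sum_comm]
  exact Finset.sum_congr rfl fun _ _ => Finset.sum_congr rfl fun _ _ => by ring

theorem of_columns_mul_diagonal_mul_transpose [Fintype ι] [DecidableEq ι] (s : ι → n → ℝ)
    (w : ι → ℝ) :
    (of fun r j => s j r) * diagonal w * (of fun r j => s j r)ᵀ =
      ∑ j, w j • vecMulVec (s j) (s j) := by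
  ext r c
  rw [mul_apply]
  simp only [mul_diagonal, transpose_apply, of_apply, Matrix.sum_apply,
    Matrix.smul_apply, vecMulVec_apply, smul_eq_mul]
  exact Finset.sum_congr rfl fun _ _ => by ring

end Columns

theorem projMat_of_columns {n q : ℕ} {s : Fin q → Fin n → ℝ} {Q : Matrix (Fin n) (Fin n) ℝ}
    (horth : ∀ i j : Fin q, i ≠ j → s i ⬝ᵥ (Q *ᵥ s j) = 0)
    (hcurv : ∀ i : Fin q, s i ⬝ᵥ (Q *ᵥ s i) ≠ 0) :
    projMat (of fun r j => s j r) Q = ∑ i, rankOneProj (s i) Q := by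
  set d : Fin q → ℝ := fun i => s i ⬝ᵥ (Q *ᵥ s i)
  have hdiag : (of fun r j => s j r)ᵀ * Q * (of fun r j => s j r) = diagonal d := by
    rw [transpose_mul_mul_of_columns]
    ext i j
    by_cases hij : i = j
    · subst hij; simp [d]
    · simp [diagonal_apply_ne _ hij, horth i j hij]
  have hinv : (diagonal d)⁻¹ = diagonal fun i => (d i)⁻¹ := by
    refine inv_eq_right_inv ?_
    rw [diagonal_mul_diagonal, ← diagonal_one]
    exact congrArg diagonal (funext fun i => mul_inv_cancel₀ (hcurv i))
  rw [projMat, hdiag, hinv, of_columns_mul_diagonal_mul_transpose]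
  rfl

theorem stmt10_general {n q : ℕ} (Q : Matrix (Fin n) (Fin n) ℝ)
    (s : Fin q → (Fin n → ℝ))
    (horth : ∀ i j : Fin q, i ≠ j → s i ⬝ᵥ (Q *ᵥ s j) = 0)
    (hcurv : ∀ i : Fin q, s i ⬝ᵥ (Q *ᵥ s i) ≠ 0)
    (G₀ : Matrix (Fin n) (Fin n) ℝ)
    (G : ℕ → Matrix (Fin n) (Fin n) ℝ)
    (hG0 : G 0 = G₀)
    (hrec : ∀ i : Fin q, G (i + 1 : ℕ) = quNac1 (G i) (s i) Q) :
    G q = Q * projMat (Matrix.of fun r j => s j r) Q * Q +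
      (1 - Q * projMat (Matrix.of fun r j => s j r) Q) * G₀ *
        (1 - projMat (Matrix.of fun r j => s j r) Q * Q) := by
  let P : ℕ → Matrix (Fin n) (Fin n) ℝ := fun i =>
    if hi : i < q then rankOneProj (s ⟨i, hi⟩) Q else 0
  have hP : ∀ i : Fin q, P i = rankOneProj (s i) Q := fun i => dif_pos i.isLt
  have hseq : G q = quNacProj G₀ (∑ i ∈ Finset.range q, P i) Q := by
    rw [← hG0]
    refine quNacProj_sequential (fun i hi j hj hij => ?_) fun i hi => ?_
    · rw [hP ⟨i, hi⟩, hP ⟨j, hj⟩]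
      exact rankOneProj_mul_mul_rankOneProj (horth _ _ (Fin.ne_of_val_ne hij))
    · rw [hP ⟨i, hi⟩, ← quNac1_eq_quNacProj]
      exact hrec ⟨i, hi⟩
  rw [hseq, ← Fin.sum_univ_eq_sum_range, projMat_of_columns horth hcurv]
  simp only [hP, quNacProj]

/-- Unravelling: if `s₁,…,s_q` are mutually `Q`-orthogonal with nonzero `Q`-curvature,
then `q` sequential single-column quNac updates equal the block quNac update. -/
theorem stmt10 {n q : ℕ} (Q : Matrix (Fin n) (Fin n) ℝ) (hQ : Q.IsSymm)
    (s : Fin q → (Fin n → ℝ))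
    (horth : ∀ i j : Fin q, i ≠ j → s i ⬝ᵥ (Q *ᵥ s j) = 0)
    (hcurv : ∀ i : Fin q, s i ⬝ᵥ (Q *ᵥ s i) ≠ 0)
    (G₀ : Matrix (Fin n) (Fin n) ℝ) (hG₀ : G₀.IsSymm)
    (G : ℕ → Matrix (Fin n) (Fin n) ℝ)
    (hG0 : G 0 = G₀)
    (hrec : ∀ i : Fin q, G (i + 1 : ℕ) = quNac1 (G i) (s i) Q) :
    G q = Q * projMat (Matrix.of fun r j => s j r) Q * Q +
      (1 - Q * projMat (Matrix.of fun r j => s j r) Q) * G₀ *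
        (1 - projMat (Matrix.of fun r j => s j r) Q * Q) :=
  stmt10_general Q s horth hcurv G₀ G hG0 hrec
end

section
/- Let Q ∈ ℝ^{n×n} be symmetric and let sᵢ, sⱼ ∈ ℝⁿ satisfy sᵢᵀQsⱼ = 0, sᵢᵀQsᵢ ≠ 0 and sⱼᵀQsⱼ ≠ 0. Define Vᵢ := I − (sᵢsᵢᵀ/(sᵢᵀQsᵢ))·Q and Vⱼ := I − (sⱼsⱼᵀ/(sⱼᵀQsⱼ))·Q, and let [sⱼ, sᵢ] ∈ ℝ^{n×2} be the column concatenation of sⱼ and sᵢ (note [sⱼ,sᵢ]ᵀQ[sⱼ,sᵢ] is an invertible diagonal matrix). Then Vᵢ·Vⱼ = I − P([sⱼ,sᵢ],Q)·Q, where P([sⱼ,sᵢ],Q) := [sⱼ,sᵢ]([sⱼ,sᵢ]ᵀQ[sⱼ,sᵢ])⁻¹[sⱼ,sᵢ]ᵀ. -/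
open Matrix

lemma cross_zero {n : ℕ} (Q : Matrix (Fin n) (Fin n) ℝ) (si sj : Fin n → ℝ)
    (horth : si ⬝ᵥ (Q *ᵥ sj) = 0) :
    vecMulVec si si * Q * vecMulVec sj sj = 0 := by
  ext i j
  simp only [mul_apply, vecMulVec_apply, Matrix.zero_apply]
  have : ∑ k, (∑ l, si i * si l * Q l k) * (sj k * sj j)
      = (si i * sj j) * (si ⬝ᵥ (Q *ᵥ sj)) := by
    simp [dotProduct, mulVec, Finset.mul_sum, Finset.sum_mul]
    rw [Finset.sum_comm]
    apply Finset.sum_congr rfl; intro k _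
    apply Finset.sum_congr rfl; intro l _
    ring
  rw [this, horth, mul_zero]

/-- Product of two rank-one oblique projection complements for `Q`-orthogonal vectors
equals the complement of the block oblique projection. -/
theorem stmt11 {n : ℕ} (Q : Matrix (Fin n) (Fin n) ℝ) (hQ : Q.IsSymm)
    (si sj : Fin n → ℝ)
    (horth : si ⬝ᵥ (Q *ᵥ sj) = 0)
    (hi : si ⬝ᵥ (Q *ᵥ si) ≠ 0) (hj : sj ⬝ᵥ (Q *ᵥ sj) ≠ 0) :
    (1 - ((si ⬝ᵥ (Q *ᵥ si))⁻¹ • vecMulVec si si) * Q) *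
      (1 - ((sj ⬝ᵥ (Q *ᵥ sj))⁻¹ • vecMulVec sj sj) * Q) =
    1 - projMat (Matrix.of fun r (c : Fin 2) => ![sj, si] c r) Q * Q := by
  set a := si ⬝ᵥ (Q *ᵥ si) with ha
  set b := sj ⬝ᵥ (Q *ᵥ sj) with hb
  set S : Matrix (Fin n) (Fin 2) ℝ := Matrix.of fun r (c : Fin 2) => ![sj, si] c r with hS
  have horth' : sj ⬝ᵥ (Q *ᵥ si) = 0 := by
    rw [Matrix.dotProduct_mulVec, ← Matrix.mulVec_transpose, hQ.eq,
      dotProduct_comm]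
    exact horth
  have quad : ∀ u v : Fin n → ℝ, (∑ k, (∑ l, u l * Q l k) * v k) = u ⬝ᵥ (Q *ᵥ v) := by
    intro u v
    simp only [dotProduct, mulVec, Finset.sum_mul, Finset.mul_sum]
    rw [Finset.sum_comm]
    exact Finset.sum_congr rfl fun k _ => Finset.sum_congr rfl fun l _ => by ring
  have hSQS : Sᵀ * Q * S = !![b, 0; 0, a] := by
    ext i j
    fin_cases i <;> fin_cases j <;>
      simp only [hS, mul_apply, transpose_apply, of_apply, Matrix.cons_val_zero,
        Matrix.cons_val_one, Matrix.head_cons, Matrix.cons_val', Matrix.empty_val',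
        Matrix.cons_val_fin_one] <;>
      rw [quad]
    · exact hb.symm
    · exact horth'
    · exact horth
    · exact ha.symm
  have hinv : (Sᵀ * Q * S)⁻¹ = !![b⁻¹, 0; 0, a⁻¹] := by
    apply Matrix.inv_eq_right_inv
    rw [hSQS]
    ext i j
    fin_cases i <;> fin_cases j <;>
      simp [mul_apply, Fin.sum_univ_two, mul_inv_cancel₀ hi, mul_inv_cancel₀ hj,
        Matrix.one_apply]
  have hproj : projMat S Q = b⁻¹ • vecMulVec sj sj + a⁻¹ • vecMulVec si si := by
    rw [projMat, hinv]
    ext i j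
    simp [hS, mul_apply, Fin.sum_univ_two, vecMulVec_apply]
    ring
  rw [hproj]
  have hcross : (a⁻¹ • vecMulVec si si * Q) * (b⁻¹ • vecMulVec sj sj * Q) = 0 := by
    have h0 := cross_zero Q si sj horth
    simp [Matrix.smul_mul, Matrix.mul_smul, ← Matrix.mul_assoc, h0]
  rw [mul_sub, sub_mul, sub_mul, hcross]
  rw [Matrix.add_mul, Matrix.smul_mul, Matrix.smul_mul]
  simp only [one_mul, mul_one]
  abel
end

section
/- Let H, Q ∈ ℝ^{n×n} be symmetric and S ∈ ℝ^{n×q}, with SᵀQS and SᵀQHQS invertible. Define the inverse quNac estimate H^I := P(S,Q) + (I − P(S,Q)·Q)·H·(I − Q·P(S,Q)) and the direct quNac inverse estimate H^D := H + P(S,Q) − H·Q·S(SᵀQHQS)⁻¹Sᵀ·Q·H, where P(S,Q) := S(SᵀQS)⁻¹Sᵀ. Let U := (P(S,Q)·Q − I)·H·Q·S ∈ ℝ^{n×q}. Then H^I − H^D = U·(SᵀQHQS)⁻¹·Uᵀ. In particular, for every λ ∈ [0,1] the family member H^λ := λH^D + (1−λ)H^I satisfies H^λ = H^I − λ·U(SᵀQHQS)⁻¹Uᵀ,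 so H^I − H^λ has rank at most q. -/
open Matrix

set_option maxHeartbeats 1000000

/-- The inverse and direct quNac inverse estimates differ by `U(SᵀQHQS)⁻¹Uᵀ`, so each
member of the quNac family `H^λ = λH^D + (1−λ)H^I` is within a rank-`q` matrix of `H^I`. -/
theorem stmt12 {n q : ℕ} (H Q : Matrix (Fin n) (Fin n) ℝ)
    (hH : H.IsSymm) (hQ : Q.IsSymm)
    (S : Matrix (Fin n) (Fin q) ℝ)
    (hSQS : IsUnit (Sᵀ * Q * S)) (hSQHQS : IsUnit (Sᵀ * Q * H * Q * S)) :
    ((projMat S Q + (1 - projMat S Q * Q) * H * (1 - Q * projMat S Q)) -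
        (H + projMat S Q - H * Q * S * (Sᵀ * Q * H * Q * S)⁻¹ * Sᵀ * Q * H)
      = ((projMat S Q * Q - 1) * H * Q * S) * (Sᵀ * Q * H * Q * S)⁻¹ *
          ((projMat S Q * Q - 1) * H * Q * S)ᵀ) ∧
    (∀ lam : ℝ, lam ∈ Set.Icc (0 : ℝ) 1 →
      (lam • (H + projMat S Q - H * Q * S * (Sᵀ * Q * H * Q * S)⁻¹ * Sᵀ * Q * H) +
        (1 - lam) • (projMat S Q + (1 - projMat S Q * Q) * H * (1 - Q * projMat S Q)))
      = (projMat S Q + (1 - projMat S Q * Q) * H * (1 - Q * projMat S Q)) -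
          lam • (((projMat S Q * Q - 1) * H * Q * S) * (Sᵀ * Q * H * Q * S)⁻¹ *
            ((projMat S Q * Q - 1) * H * Q * S)ᵀ)) ∧
    (∀ lam : ℝ, lam ∈ Set.Icc (0 : ℝ) 1 →
      ((projMat S Q + (1 - projMat S Q * Q) * H * (1 - Q * projMat S Q)) -
        (lam • (H + projMat S Q - H * Q * S * (Sᵀ * Q * H * Q * S)⁻¹ * Sᵀ * Q * H) +
          (1 - lam) • (projMat S Q + (1 - projMat S Q * Q) * H *
            (1 - Q * projMat S Q)))).rank ≤ q) := by
  have hH' : Hᵀ = H := hH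
  have hQ' : Qᵀ = Q := hQ
  have hdiff : ((projMat S Q + (1 - projMat S Q * Q) * H * (1 - Q * projMat S Q)) -
        (H + projMat S Q - H * Q * S * (Sᵀ * Q * H * Q * S)⁻¹ * Sᵀ * Q * H)
      = ((projMat S Q * Q - 1) * H * Q * S) * (Sᵀ * Q * H * Q * S)⁻¹ *
          ((projMat S Q * Q - 1) * H * Q * S)ᵀ) := by
    have hBsymm : (Sᵀ * Q * H * Q * S)ᵀ = Sᵀ * Q * H * Q * S := by
      simp [transpose_mul, hH', hQ', Matrix.mul_assoc]
    have hWsymm : ((Sᵀ * Q * S)⁻¹)ᵀ = (Sᵀ * Q * S)⁻¹ := by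
      rw [transpose_nonsing_inv]
      congr 1
      simp [transpose_mul, hQ', Matrix.mul_assoc]
    have hMsymm : ((Sᵀ * Q * H * Q * S)⁻¹)ᵀ = (Sᵀ * Q * H * Q * S)⁻¹ := by
      rw [transpose_nonsing_inv, hBsymm]
    have hBa : Sᵀ * Q * H * Q * S = Sᵀ * (Q * (H * (Q * S))) := by
      simp only [Matrix.mul_assoc]
    have hM1 : ∀ x : Matrix (Fin q) (Fin n) ℝ,
        Sᵀ * (Q * (H * (Q * (S * ((Sᵀ * (Q * (H * (Q * S))))⁻¹ * x))))) = x := by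
      intro x
      have h := mul_nonsing_inv _ ((Matrix.isUnit_iff_isUnit_det _).mp hSQHQS)
      rw [hBa] at h
      calc Sᵀ * (Q * (H * (Q * (S * ((Sᵀ * (Q * (H * (Q * S))))⁻¹ * x)))))
          = (Sᵀ * (Q * (H * (Q * S))) * (Sᵀ * (Q * (H * (Q * S))))⁻¹) * x := by
            simp only [Matrix.mul_assoc]
        _ = x := by rw [h, Matrix.one_mul]
    have hM2 : ∀ x : Matrix (Fin q) (Fin n) ℝ,
        (Sᵀ * (Q * (H * (Q * S))))⁻¹ * (Sᵀ * (Q * (H * (Q * (S * x))))) = x := by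
      intro x
      have h := nonsing_inv_mul _ ((Matrix.isUnit_iff_isUnit_det _).mp hSQHQS)
      rw [hBa] at h
      calc (Sᵀ * (Q * (H * (Q * S))))⁻¹ * (Sᵀ * (Q * (H * (Q * (S * x)))))
          = ((Sᵀ * (Q * (H * (Q * S))))⁻¹ * (Sᵀ * (Q * (H * (Q * S))))) * x := by
            simp only [Matrix.mul_assoc]
        _ = x := by rw [h, Matrix.one_mul]
    simp only [projMat, transpose_mul, transpose_one, transpose_sub, transpose_transpose,
      hH', hQ', hWsymm, hMsymm]
    simp only [Matrix.sub_mul, Matrix.mul_sub, Matrix.add_mul, Matrix.mul_add,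
      Matrix.one_mul, Matrix.mul_one, Matrix.mul_assoc, hM1, hM2]
    abel
  have hfam : ∀ lam : ℝ, lam ∈ Set.Icc (0 : ℝ) 1 →
      (lam • (H + projMat S Q - H * Q * S * (Sᵀ * Q * H * Q * S)⁻¹ * Sᵀ * Q * H) +
        (1 - lam) • (projMat S Q + (1 - projMat S Q * Q) * H * (1 - Q * projMat S Q)))
      = (projMat S Q + (1 - projMat S Q * Q) * H * (1 - Q * projMat S Q)) -
          lam • (((projMat S Q * Q - 1) * H * Q * S) * (Sᵀ * Q * H * Q * S)⁻¹ *
            ((projMat S Q * Q - 1) * H * Q * S)ᵀ) := by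
    intro lam _
    rw [← hdiff]
    module
  refine ⟨hdiff, hfam, ?_⟩
  intro lam hlam
  rw [hfam lam hlam, sub_sub_cancel]
  have hrw : lam • (((projMat S Q * Q - 1) * H * Q * S) * (Sᵀ * Q * H * Q * S)⁻¹ *
          ((projMat S Q * Q - 1) * H * Q * S)ᵀ)
      = ((lam • ((projMat S Q * Q - 1) * H * Q * S)) * (Sᵀ * Q * H * Q * S)⁻¹) *
          ((projMat S Q * Q - 1) * H * Q * S)ᵀ := by
    rw [Matrix.smul_mul, Matrix.smul_mul]
  rw [hrw]
  exact ((rank_mul_le_left _ _).trans (rank_mul_le_left _ _)).trans (rank_le_width _)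
end

section
/- Let G, Q ∈ ℝ^{n×n} be symmetric with G invertible, write H := G⁻¹, and let S ∈ ℝ^{n×q} be such that SᵀQS and SᵀQHQS are invertible. Let G⁺ := Q·P(S,Q)·Q + (I − Q·P(S,Q))·G·(I − P(S,Q)·Q) be the direct quNac update of G, where P(S,Q) := S(SᵀQS)⁻¹Sᵀ. Then G⁺ is invertible and its inverse is given explicitly by (G⁺)⁻¹ = H + S(SᵀQS)⁻¹Sᵀ − H·Q·S(SᵀQHQS)⁻¹Sᵀ·Q·H. -/
/-! With `P := S (SᵀQS)⁻¹ Sᵀ` one has `PQP = P` and `PQS = S`, so the update `G⁺` sends `P` to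
`QP`. Writing `W := HQS(SᵀQHQS)⁻¹SᵀQH`, the matrix `H - W` is killed by `PQ`, so on it `G⁺` acts
as `(1 - QP)G`, and `G(H - W) = 1 - QS(SᵀQHQS)⁻¹SᵀQH` is sent by `1 - QP` to `1 - QP` because
`QPQS = QS`. Adding up, `G⁺ (H + P - W) = 1`. -/

open Matrix

/-- The paper's `quNac(G, S, Q)` is `quNac G (projMat S Q) Q`. -/
def quNac {m R : Type*} [Fintype m] [DecidableEq m] [Ring R] (G P Q : Matrix m m R) :
    Matrix m m R :=
  Q * P * Q + (1 - Q * P) * G * (1 - P * Q)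

section

variable {m R : Type*} [Fintype m] [DecidableEq m] [Ring R] {G P Q : Matrix m m R}

theorem quNac_mul_of_mul_mul_self (hP : P * Q * P = P) : quNac G P Q * P = Q * P := by
  have hQP : Q * P * Q * P = Q * P := by
    simp only [mul_assoc] at hP ⊢
    rw [hP]
  have hKill : (1 - P * Q) * P = 0 := by rw [sub_mul, one_mul, hP, sub_self]
  rw [quNac, add_mul, hQP, mul_assoc _ (1 - P * Q), hKill, mul_zero, add_zero]

theorem quNac_mul_of_mul_mul_eq_zero {X : Matrix m m R} (hX : P * Q * X = 0) :
    quNac G P Q * X = (1 - Q * P) * G * X := by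
  have hQP : Q * P * Q * X = Q * (P * Q * X) := by simp only [mul_assoc]
  have hFix : (1 - P * Q) * X = X := by rw [sub_mul, one_mul, hX, sub_zero]
  rw [quNac, add_mul, hQP, hX, mul_zero, zero_add, mul_assoc _ (1 - P * Q), hFix]

end

section

variable {m k R : Type*} [Fintype m] [DecidableEq m] [Fintype k] [DecidableEq k] [Ring R]
  {G H Q : Matrix m m R} {S : Matrix m k R} {T : Matrix k m R} {A B : Matrix k k R}

theorem quNac_mul_woodbury_eq_one (hGH : G * H = 1) (hA : A * (T * Q * S) = 1)
    (hB : T * Q * H * Q * S * B = 1) :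
    quNac G (S * A * T) Q * (H + S * A * T - H * Q * S * B * T * Q * H) = 1 := by
  set P := S * A * T
  set W := H * Q * S * B * T * Q * H
  have hPQS : P * Q * S = S := by
    rw [show P * Q * S = S * (A * (T * Q * S)) by simp only [P, Matrix.mul_assoc], hA,
      Matrix.mul_one]
  have hPQP : P * Q * P = P := by
    simp only [P, ← Matrix.mul_assoc] at hPQS ⊢
    rw [hPQS]
  have hPQW : P * Q * W = P * Q * H := by
    calc P * Q * W = S * A * (T * Q * H * Q * S * B) * T * Q * H := by
          simp only [P, W, Matrix.mul_assoc]
      _ = P * Q * H := by rw [hB, Matrix.mul_one]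
  have hGW : G * (H - W) = 1 - Q * S * B * T * Q * H := by
    rw [mul_sub, hGH, show G * W = G * H * (Q * S * B * T * Q * H) by
      simp only [W, Matrix.mul_assoc], hGH, one_mul]
  have hQPQS : (1 - Q * P) * (Q * S) = 0 := by
    rw [Matrix.sub_mul, Matrix.one_mul,
      show Q * P * (Q * S) = Q * (P * Q * S) by simp only [Matrix.mul_assoc], hPQS, sub_self]
  have hHW : quNac G P Q * (H - W) = 1 - Q * P := by
    calc quNac G P Q * (H - W) = (1 - Q * P) * (G * (H - W)) := by
          rw [quNac_mul_of_mul_mul_eq_zero (by rw [mul_sub, hPQW, sub_self]), mul_assoc]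
      _ = 1 - Q * P - (1 - Q * P) * (Q * S) * (B * T * Q * H) := by
          rw [hGW, mul_sub, mul_one]
          simp only [Matrix.mul_assoc]
      _ = 1 - Q * P := by rw [hQPQS, Matrix.zero_mul, sub_zero]
  rw [show H + P - W = (H - W) + P by abel, mul_add, hHW, quNac_mul_of_mul_mul_self hPQP,
    sub_add_cancel]

end

theorem stmt14_general {n q : ℕ} (G Q : Matrix (Fin n) (Fin n) ℝ)
    (hGinv : IsUnit G)
    (S : Matrix (Fin n) (Fin q) ℝ)
    (hSQS : IsUnit (Sᵀ * Q * S)) (hSQHQS : IsUnit (Sᵀ * Q * G⁻¹ * Q * S)) :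
    IsUnit (Q * projMat S Q * Q + (1 - Q * projMat S Q) * G * (1 - projMat S Q * Q)) ∧
    (Q * projMat S Q * Q + (1 - Q * projMat S Q) * G * (1 - projMat S Q * Q))⁻¹ =
      G⁻¹ + S * (Sᵀ * Q * S)⁻¹ * Sᵀ -
        G⁻¹ * Q * S * (Sᵀ * Q * G⁻¹ * Q * S)⁻¹ * Sᵀ * Q * G⁻¹ := by
  rw [isUnit_iff_isUnit_det] at hGinv hSQS hSQHQS
  have hRightInv := quNac_mul_woodbury_eq_one (mul_nonsing_inv G hGinv)
    (nonsing_inv_mul _ hSQS) (mul_nonsing_inv _ hSQHQS)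
  rw [quNac, ← projMat] at hRightInv
  exact ⟨(isUnit_iff_isUnit_det _).mpr (isUnit_det_of_right_inverse hRightInv),
    inv_eq_right_inv hRightInv⟩

/-- Woodbury-type formula for the inverse of the direct quNac update:
`(G⁺)⁻¹ = H + S(SᵀQS)⁻¹Sᵀ − HQS(SᵀQHQS)⁻¹SᵀQH` where `H = G⁻¹`. -/
theorem stmt14 {n q : ℕ} (G Q : Matrix (Fin n) (Fin n) ℝ)
    (hG : G.IsSymm) (hQ : Q.IsSymm) (hGinv : IsUnit G)
    (S : Matrix (Fin n) (Fin q) ℝ)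
    (hSQS : IsUnit (Sᵀ * Q * S)) (hSQHQS : IsUnit (Sᵀ * Q * G⁻¹ * Q * S)) :
    IsUnit (Q * projMat S Q * Q + (1 - Q * projMat S Q) * G * (1 - projMat S Q * Q)) ∧
    (Q * projMat S Q * Q + (1 - Q * projMat S Q) * G * (1 - projMat S Q * Q))⁻¹ =
      G⁻¹ + S * (Sᵀ * Q * S)⁻¹ * Sᵀ -
        G⁻¹ * Q * S * (Sᵀ * Q * G⁻¹ * Q * S)⁻¹ * Sᵀ * Q * G⁻¹ :=
  stmt14_general G Q hGinv S hSQS hSQHQS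
end

section
/- Let H, Q ∈ ℝ^{n×n} be symmetric, let S ∈ ℝ^{n×q} be such that Sᵀ·Q·S is positive definite, and suppose H is positive definite. Define the inverse quNac update H⁺ := P(S,Q) + (I − P(S,Q)·Q)·H·(I − Q·P(S,Q)), where P(S,Q) := S(SᵀQS)⁻¹Sᵀ. Then H⁺ is symmetric, positive definite, and satisfies the inverse action constraint H⁺·(Q·S) = S. -/
/-!
Write `P := P(S,Q)` and `C := 1 - Q P`. Since `Q` and `P` are symmetric, `1 - P Q = Cᵀ`, so
`H⁺ = S (SᵀQS)⁻¹ Sᵀ + Cᵀ H C` is a sum of two positive semidefinite forms. A vector `x` on which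
both vanish has `Sᵀx = 0` and `Cx = 0`; the first gives `P x = 0`, and then `x = Q P x = 0`.
Symmetry is part of positive definiteness, and the constraint holds because `P Q S = S`,
so that `C` annihilates `Q S`.
-/

open Matrix

namespace Matrix

variable {m n k R : Type*} [Fintype m] [Fintype n] [Fintype k]
  [CommRing R] [PartialOrder R] [StarRing R] [IsOrderedAddMonoid R]

lemma PosDef.mul_mul_conjTranspose_add_conjTranspose_mul_mul {A : Matrix m m R}
    {H : Matrix k k R} (hA : A.PosDef) (hH : H.PosDef) (B : Matrix n m R) (C : Matrix k n R)
    (hBC : ∀ x, Bᴴ *ᵥ x = 0 → C *ᵥ x = 0 → x = 0) :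
    (B * A * Bᴴ + Cᴴ * H * C).PosDef := by
  refine of_dotProduct_mulVec_pos
    ((isHermitian_mul_mul_conjTranspose B hA.1).add (isHermitian_conjTranspose_mul_mul C hH.1))
    fun x hx => ?_
  have hB : star x ⬝ᵥ ((B * A * Bᴴ) *ᵥ x) = star (Bᴴ *ᵥ x) ⬝ᵥ (A *ᵥ (Bᴴ *ᵥ x)) := by
    simp only [star_mulVec, conjTranspose_conjTranspose, ← mulVec_mulVec, dotProduct_mulVec,
      vecMul_vecMul]
  have hC : star x ⬝ᵥ ((Cᴴ * H * C) *ᵥ x) = star (C *ᵥ x) ⬝ᵥ (H *ᵥ (C *ᵥ x)) := by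
    simp only [star_mulVec, ← mulVec_mulVec, dotProduct_mulVec, vecMul_vecMul]
  rw [add_mulVec, dotProduct_add, hB, hC]
  by_cases hBx : Bᴴ *ᵥ x = 0
  · have hCx : C *ᵥ x ≠ 0 := fun hCx => hx (hBC x hBx hCx)
    exact add_pos_of_nonneg_of_pos (hA.posSemidef.dotProduct_mulVec_nonneg _)
      (hH.dotProduct_mulVec_pos hCx)
  · exact add_pos_of_pos_of_nonneg (hA.dotProduct_mulVec_pos hBx)
      (hH.posSemidef.dotProduct_mulVec_nonneg _)

end Matrix

section projMat

variable {n q : ℕ} {S : Matrix (Fin n) (Fin q) ℝ} {Q : Matrix (Fin n) (Fin n) ℝ}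

lemma projMat_mul_mul_self (hSQS : IsUnit (Sᵀ * Q * S).det) : projMat S Q * (Q * S) = S := by
  rw [projMat, Matrix.mul_assoc, Matrix.mul_assoc, ← Matrix.mul_assoc Sᵀ,
    nonsing_inv_mul _ hSQS, Matrix.mul_one]

lemma eq_zero_of_transpose_mulVec_eq_zero_of_one_sub_mul_projMat_mulVec_eq_zero
    {x : Fin n → ℝ} (hS : Sᵀ *ᵥ x = 0) (hP : (1 - Q * projMat S Q) *ᵥ x = 0) : x = 0 := by
  have hPx : projMat S Q *ᵥ x = 0 := by
    rw [projMat, ← mulVec_mulVec, hS, mulVec_zero]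
  rwa [sub_mulVec, one_mulVec, ← mulVec_mulVec, hPx, mulVec_zero, sub_zero] at hP

end projMat

noncomputable def invQuNacUpdate {n q : ℕ} (H Q : Matrix (Fin n) (Fin n) ℝ)
    (S : Matrix (Fin n) (Fin q) ℝ) : Matrix (Fin n) (Fin n) ℝ :=
  projMat S Q + (1 - projMat S Q * Q) * H * (1 - Q * projMat S Q)

section invQuNacUpdate

variable {n q : ℕ} {H Q : Matrix (Fin n) (Fin n) ℝ} {S : Matrix (Fin n) (Fin q) ℝ}

lemma invQuNacUpdate_mul_mul_self (hSQS : IsUnit (Sᵀ * Q * S).det) :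
    invQuNacUpdate H Q S * (Q * S) = S := by
  have hkill : (1 - Q * projMat S Q) * (Q * S) = 0 := by
    rw [Matrix.sub_mul, Matrix.one_mul, Matrix.mul_assoc, projMat_mul_mul_self hSQS, sub_self]
  rw [invQuNacUpdate, Matrix.add_mul, projMat_mul_mul_self hSQS, Matrix.mul_assoc _ _ (Q * S),
    hkill, Matrix.mul_zero, add_zero]

lemma invQuNacUpdate_posDef (hQ : Q.IsSymm) (hSQS : (Sᵀ * Q * S).PosDef) (hH : H.PosDef) :
    (invQuNacUpdate H Q S).PosDef := by
  have hform : invQuNacUpdate H Q S = S * (Sᵀ * Q * S)⁻¹ * Sᴴ +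
      (1 - Q * projMat S Q)ᴴ * H * (1 - Q * projMat S Q) := by
    simp only [conjTranspose_eq_transpose_of_trivial, transpose_sub, transpose_one,
      transpose_mul, projMat_transpose hQ, hQ.eq]
    rfl
  rw [hform]
  refine hSQS.inv.mul_mul_conjTranspose_add_conjTranspose_mul_mul hH _ _ fun x hS hP => ?_
  rw [conjTranspose_eq_transpose_of_trivial] at hS
  exact eq_zero_of_transpose_mulVec_eq_zero_of_one_sub_mul_projMat_mulVec_eq_zero hS hP

end invQuNacUpdate

theorem stmt15_general {n q : ℕ} (H Q : Matrix (Fin n) (Fin n) ℝ)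
    (hQ : Q.IsSymm)
    (S : Matrix (Fin n) (Fin q) ℝ) (hSQS : (Sᵀ * Q * S).PosDef)
    (hHpd : H.PosDef) :
    ((projMat S Q + (1 - projMat S Q * Q) * H * (1 - Q * projMat S Q)).IsSymm) ∧
    ((projMat S Q + (1 - projMat S Q * Q) * H * (1 - Q * projMat S Q)).PosDef) ∧
    (projMat S Q + (1 - projMat S Q * Q) * H * (1 - Q * projMat S Q)) * (Q * S) = S := by
  have hpd : (invQuNacUpdate H Q S).PosDef := invQuNacUpdate_posDef hQ hSQS hHpd
  exact ⟨isHermitian_iff_isSymm.mp hpd.isHermitian, hpd,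
    invQuNacUpdate_mul_mul_self ((isUnit_iff_isUnit_det _).mp hSQS.isUnit)⟩

/-- The inverse quNac update `H⁺ := P(S,Q) + (I − P(S,Q)Q) H (I − Q P(S,Q))` of a
positive definite `H` is symmetric positive definite and satisfies the inverse
action constraint `H⁺(QS) = S`. -/
theorem stmt15 {n q : ℕ} (H Q : Matrix (Fin n) (Fin n) ℝ)
    (hH : H.IsSymm) (hQ : Q.IsSymm)
    (S : Matrix (Fin n) (Fin q) ℝ) (hSQS : (Sᵀ * Q * S).PosDef)
    (hHpd : H.PosDef) :
    ((projMat S Q + (1 - projMat S Q * Q) * H * (1 - Q * projMat S Q)).IsSymm) ∧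
    ((projMat S Q + (1 - projMat S Q * Q) * H * (1 - Q * projMat S Q)).PosDef) ∧
    (projMat S Q + (1 - projMat S Q * Q) * H * (1 - Q * projMat S Q)) * (Q * S) = S :=
  stmt15_general H Q hQ S hSQS hHpd
end
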